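/- Let n ≥ 5. In the group K_n, the subgroup K_n^+ = ⟨b^{-2}, a⟩ is an abelian subgroup of index two isomorphic to C_{2^{n-2}} × C_4, and K_n^+ contains exactly three involutions. -/

import Mathlib

/-- The exponent `α` in the presentation of `K_n`: `α = -1` for `n` even, `α = 3` for
`n` odd. -/
def kAlpha (n : ℕ) : ℤ := if Even n then -1 else 3

/-- The relators of the group `K_n`:
`a^8 = 1`, `b^(2^(n-2)) = a^4`, `b * a * b⁻¹ = a^α`.
The generator `a` is encoded by `true` and `b` by `false`. -/
def kRels (n : ℕ) : Set (FreeGroup Bool) :=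
  {FreeGroup.of true ^ 8,
   FreeGroup.of false ^ 2 ^ (n - 2) * (FreeGroup.of true ^ 4)⁻¹,
   FreeGroup.of false * FreeGroup.of true * (FreeGroup.of false)⁻¹ *
     (FreeGroup.of true ^ kAlpha n)⁻¹}

/-- The group `K_n`, given by the presentation
`⟨a, b ∣ a^8 = 1, b^(2^(n-2)) = a^4, b a b⁻¹ = a^α⟩`, where `α = -1` if `n` is even
and `α = 3` if `n` is odd. -/
abbrev K (n : ℕ) : Type := PresentedGroup (kRels n)

/-- The generator `a` of `K_n`. -/
def ka (n : ℕ) : K n := PresentedGroup.of true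

/-- The generator `b` of `K_n`. -/
def kb (n : ℕ) : K n := PresentedGroup.of false

/-!
Since `α² ≡ 1 (mod 8)`, the element `x = b⁻²` commutes with `a`, so `K⁺ = ⟨x, a⟩` is abelian.
The relation `x ^ 2 ^ (n - 3) = a⁻⁴` shows that `x` and `h = a x ^ 2 ^ (n - 5)` satisfy
`x ^ 2 ^ (n - 2) = h ^ 4 = 1` and generate `K⁺`, which gives a surjection
`C_(2^(n-2)) × C₄ → K⁺`. It is injective because `K_n` maps to the wreath product
`C_(2^(n-2)) ≀ C₂` by `a ↦ (c, α c)`, `b ↦ ((0, 1), swap)` with `c = 2 ^ (n - 5)`: there `x` and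
`h` become `(-1, -1)` and `(0, (α - 1) c)`, which are independent as `α ≡ 3 (mod 4)`.
The image of `K⁺` lies in the base of the wreath product and that of `b` does not; as `b`
normalises `K⁺` and `b² ∈ K⁺`, the index is two. The involutions of `C_(2^(n-2)) × C₄` are the
three nontrivial elements of `{0, 2^(n-3)} × {0, 2}`.
-/

open Multiplicative SemidirectProduct

section GroupLemmas

variable {G : Type*} [Group G]

def zmodPowersHom {n : ℕ} [NeZero n] (g : G) (hg : g ^ n = 1) : Multiplicative (ZMod n) →* G where
  toFun s := g ^ (toAdd s).val
  map_one' := by rw [toAdd_one, ZMod.val_zero, pow_zero]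
  map_mul' s t := by rw [toAdd_mul, ZMod.val_add, ← pow_eq_pow_mod _ hg, pow_add]

lemma zmodPowersHom_ofAdd_one {n : ℕ} [NeZero n] (g : G) (hg : g ^ n = 1) :
    zmodPowersHom g hg (ofAdd 1) = g := by
  rw [zmodPowersHom, MonoidHom.coe_mk, OneHom.coe_mk, toAdd_ofAdd, ZMod.val_one_eq_one_mod,
    ← pow_eq_pow_mod _ hg, pow_one]

namespace Subgroup

lemma mem_normalizer_closure_of_conj {s : Set G} {g : G}
    (h₁ : ∀ x ∈ s, g * x * g⁻¹ ∈ closure s) (h₂ : ∀ x ∈ s, g⁻¹ * x * g ∈ closure s) :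
    g ∈ normalizer (closure s : Set G) := by
  rw [mem_normalizer_iff_map_conj_eq, MonoidHom.map_closure]
  refine le_antisymm ((closure_le _).2 ?_) ((closure_le _).2 fun x hx => ?_)
  · rintro _ ⟨x, hx, rfl⟩
    exact h₁ x hx
  · rw [← MonoidHom.map_closure]
    exact ⟨g⁻¹ * x * g, h₂ x hx, by simp [mul_assoc]⟩

lemma index_eq_two_of_sup_zpowers_eq_top {N : Subgroup G} {b : G}
    (hnorm : b ∈ normalizer (N : Set G)) (hsq : b ^ 2 ∈ N) (hb : b ∉ N)
    (htop : N ⊔ zpowers b = ⊤) : N.index = 2 := by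
  refine index_eq_two_iff_exists_notMem_and.2 ⟨b, hb, fun g => ?_⟩
  have hg : g ∈ (↑(N ⊔ zpowers b) : Set G) := by rw [htop]; trivial
  rw [coe_mul_of_right_le_normalizer_left N _ (zpowers_le.2 hnorm)] at hg
  obtain ⟨m, hm, _, ⟨k, rfl⟩, rfl⟩ := hg
  have hsq' : b ^ (2 : ℤ) ∈ N := by rwa [zpow_two, ← pow_two]
  obtain ⟨q, rfl | rfl⟩ := Int.even_or_odd' k
  · refine .inr (mul_mem hm ?_)
    simpa only [zpow_mul] using zpow_mem hsq' q
  · refine .inl ?_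
    simp only [mul_assoc, ← zpow_add_one, show 2 * q + 1 + 1 = 2 * (q + 1) by ring, zpow_mul]
    exact mul_mem hm (zpow_mem hsq' _)

lemma card_setOf_orderOf_eq_and_mem {A : Type*} [Group A] {H : Subgroup G} (e : A ≃* H) (k : ℕ) :
    Nat.card {g : G | orderOf g = k ∧ g ∈ H} = Nat.card {p : A | orderOf p = k} := by
  have hf : Function.Injective (H.subtype.comp e.toMonoidHom) :=
    H.subtype_injective.comp e.injective
  rw [← Nat.card_image_of_injective hf]
  congr
  ext g
  constructor
  · rintro ⟨hk, hg⟩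
    refine ⟨e.symm ⟨g, hg⟩, ?_, by simp⟩
    rwa [Set.mem_ofPred_eq, MulEquiv.orderOf_eq, orderOf_mk]
  · rintro ⟨p, hp, rfl⟩
    exact ⟨(orderOf_injective _ hf p).trans hp, (e p).2⟩

end Subgroup

end GroupLemmas

lemma ZMod.add_self_eq_zero_iff {M m : ℕ} (hM : M = 2 * m) (hm : 0 < m) {s : ZMod M} :
    s + s = 0 ↔ s = 0 ∨ s = m := by
  subst hM
  have : NeZero (2 * m) := ⟨by omega⟩
  refine ⟨fun h => ?_, ?_⟩
  · rw [← ZMod.natCast_zmod_val s] at h ⊢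
    rw [← Nat.cast_add, ZMod.natCast_eq_zero_iff] at h
    obtain ⟨k, hk⟩ := h
    have hlt := ZMod.val_lt s
    have hk2 : k < 2 := by nlinarith
    interval_cases k
    · left; rw [show s.val = 0 by omega, Nat.cast_zero]
    · right; rw [show s.val = m by omega]
  · rintro (rfl | rfl)
    · rw [add_zero]
    · rw [← Nat.cast_add, ← two_mul, ZMod.natCast_self]

lemma card_setOf_orderOf_eq_two_prod_zmod_four {M m : ℕ} (hM : M = 2 * m) (hm : 0 < m) :
    Nat.card {p : Multiplicative (ZMod M) × Multiplicative (ZMod 4) | orderOf p = 2} = 3 := by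
  have hm0 : (m : ZMod M) ≠ 0 := by
    rw [ne_eq, ZMod.natCast_eq_zero_iff, hM]
    exact fun h => by have := Nat.le_of_dvd hm h; omega
  have h4 : ∀ t : ZMod 4, t + t = 0 ↔ t = 0 ∨ t = 2 := by decide
  have h20 : (2 : ZMod 4) ≠ 0 := by decide
  rw [Nat.card_coe_set_eq, Set.ncard_eq_three]
  refine ⟨(ofAdd (m : ZMod M), ofAdd 0), (ofAdd 0, ofAdd 2), (ofAdd (m : ZMod M), ofAdd 2),
    ?_, ?_, ?_, ?_⟩
  · exact fun h => h20 (ofAdd.injective (congrArg Prod.snd h)).symm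
  · exact fun h => h20 (ofAdd.injective (congrArg Prod.snd h)).symm
  · exact fun h => hm0 (ofAdd.injective (congrArg Prod.fst h)).symm
  ext ⟨s, t⟩
  obtain ⟨s, rfl⟩ := ofAdd.surjective s
  obtain ⟨t, rfl⟩ := ofAdd.surjective t
  simp only [Set.mem_ofPred_eq, orderOf_eq_prime_iff, Prod.pow_mk, ← ofAdd_nsmul, two_nsmul,
    ne_eq, Prod.mk_eq_one, ofAdd_eq_one, ZMod.add_self_eq_zero_iff hM hm, h4,
    Set.mem_insert_iff, Set.mem_singleton_iff, Prod.mk.injEq, EmbeddingLike.apply_eq_iff_eq]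
  constructor
  · rintro ⟨⟨rfl | rfl, rfl | rfl⟩, hne⟩
    · exact absurd ⟨rfl, rfl⟩ hne
    · exact .inr (.inl ⟨rfl, rfl⟩)
    · exact .inl ⟨rfl, rfl⟩
    · exact .inr (.inr ⟨rfl, rfl⟩)
  · rintro (⟨rfl, rfl⟩ | ⟨rfl, rfl⟩ | ⟨rfl, rfl⟩)
    · exact ⟨⟨.inr rfl, .inl rfl⟩, fun h => hm0 h.1⟩
    · exact ⟨⟨.inl rfl, .inr rfl⟩, fun h => h20 h.2⟩
    · exact ⟨⟨.inr rfl, .inr rfl⟩, fun h => hm0 h.1⟩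

lemma ZMod.intCast_mul_eq_zero_of_dvd {m c : ℕ} {k : ℤ} (hk : (m : ℤ) ∣ k) :
    (k : ZMod (m * c)) * c = 0 := by
  obtain ⟨j, rfl⟩ := hk
  have hmc : ((m * c : ℕ) : ZMod (m * c)) = 0 := ZMod.natCast_self _
  push_cast at hmc ⊢
  linear_combination (j : ZMod (m * c)) * hmc

def swapAction (A : Type*) [AddGroup A] :
    Multiplicative (ZMod 2) →* MulAut (Multiplicative (A × A)) :=
  zmodPowersHom (AddEquiv.prodComm : A × A ≃+ A × A).toMultiplicative (by ext <;> rfl)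

lemma swapAction_ofAdd_one (A : Type*) [AddGroup A] (p : A × A) :
    swapAction A (ofAdd 1) (ofAdd p) = ofAdd p.swap := rfl

-- `C_(8c) ≀ C₂`, with `C₂` swapping the two factors of the base.
abbrev Wreath (c : ℕ) : Type :=
  Multiplicative (ZMod (8 * c) × ZMod (8 * c)) ⋊[swapAction _] Multiplicative (ZMod 2)

namespace Wreath

variable {c : ℕ}

def base (u v : ZMod (8 * c)) : Wreath c := inl (ofAdd (u, v))

lemma base_mul (u v u' v' : ZMod (8 * c)) : base u v * base u' v' = base (u + u') (v + v') := by
  rw [base, base, ← map_mul, ← ofAdd_add, Prod.mk_add_mk, base]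

lemma base_pow (u v : ZMod (8 * c)) (k : ℕ) :
    base u v ^ k = base ((k : ZMod (8 * c)) * u) (k * v) := by
  rw [base, ← map_pow, ← ofAdd_nsmul, Prod.smul_mk, nsmul_eq_mul, nsmul_eq_mul, base]

lemma base_zpow (u v : ZMod (8 * c)) (k : ℤ) :
    base u v ^ k = base ((k : ZMod (8 * c)) * u) (k * v) := by
  rw [base, ← map_zpow, ← ofAdd_zsmul, Prod.smul_mk, zsmul_eq_mul, zsmul_eq_mul, base]

lemma base_inv (u v : ZMod (8 * c)) : (base u v)⁻¹ = base (-u) (-v) := by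
  rw [base, ← map_inv, ← ofAdd_neg, Prod.neg_mk, base]

lemma base_eq_one_iff {u v : ZMod (8 * c)} : base u v = 1 ↔ u = 0 ∧ v = 0 := by
  rw [base, ← map_one inl, inl_inj, ← ofAdd_zero, ofAdd.injective.eq_iff, Prod.mk_eq_zero]

variable (c) in
def b : Wreath c := ⟨ofAdd (0, 1), ofAdd 1⟩

lemma b_eq : b c = base 0 1 * inr (ofAdd 1) := mk_eq_inl_mul_inr _ _

lemma inr_mul_base (u v : ZMod (8 * c)) :
    (inr (ofAdd 1) : Wreath c) * base u v = base v u * inr (ofAdd 1) := by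
  have h := inl_aut (φ := swapAction (ZMod (8 * c))) (ofAdd 1) (ofAdd (u, v))
  rw [swapAction_ofAdd_one] at h
  rw [base, base, show ((v, u) : ZMod (8 * c) × ZMod (8 * c)) = (u, v).swap from rfl, h,
    map_inv, inv_mul_cancel_right]

lemma b_sq : b c ^ 2 = base 1 1 := by
  rw [pow_two, b_eq, mul_assoc, ← mul_assoc (inr _), inr_mul_base, mul_assoc, ← map_mul,
    ← ofAdd_add, show (1 + 1 : ZMod 2) = 0 from rfl, ofAdd_zero, map_one, mul_one, base_mul,
    zero_add, add_zero]

lemma b_mul_base_mul_inv (u v : ZMod (8 * c)) : b c * base u v * (b c)⁻¹ = base v u := by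
  calc b c * base u v * (b c)⁻¹
      = base 0 1 * (inr (ofAdd 1) * base u v * (inr (ofAdd 1))⁻¹) * (base 0 1)⁻¹ := by
        rw [b_eq]; group
    _ = base v u := by
        rw [inr_mul_base, mul_inv_cancel_right, base_inv, base_mul, base_mul]
        congr 1 <;> ring

lemma rightHom_b : rightHom (b c) = ofAdd 1 := rfl

variable (c) in
def a (α : ℤ) : Wreath c := base c (α * c)

variable {α : ℤ}

lemma a_pow_eight : a c α ^ 8 = 1 := by
  rw [a, base_pow, base_eq_one_iff]
  constructor
  · simpa using ZMod.intCast_mul_eq_zero_of_dvd (m := 8) (c := c) (dvd_refl _)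
  · linear_combination
      (α : ZMod (8 * c)) * ZMod.intCast_mul_eq_zero_of_dvd (m := 8) (c := c) (dvd_refl _)

lemma b_pow (hα : Odd α) : b c ^ (8 * c) = a c α ^ 4 := by
  have h : ((4 * (α - 1) : ℤ) : ZMod (8 * c)) * c = 0 := by
    obtain ⟨k, rfl⟩ := hα
    exact ZMod.intCast_mul_eq_zero_of_dvd ⟨k, by push_cast; ring⟩
  push_cast at h
  rw [show b c ^ (8 * c) = (b c ^ 2) ^ (4 * c) by rw [← pow_mul, show 2 * (4 * c) = 8 * c by ring],
    b_sq, base_pow, a, base_pow]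
  congr 1
  · push_cast; ring
  · push_cast; linear_combination -h

lemma b_mul_a_mul_inv (hα : Odd α) : b c * a c α * (b c)⁻¹ = a c α ^ α := by
  have h := ZMod.intCast_mul_eq_zero_of_dvd (m := 8) (c := c)
    (by exact_mod_cast Int.eight_dvd_sq_sub_one_of_odd hα)
  push_cast at h
  rw [a, b_mul_base_mul_inv, base_zpow]
  congr 1
  linear_combination -h

lemma eq_zero_of_pow_mul_pow_eq_one (hc : 0 < c) (hα : α % 4 = 3) {s t : ℕ} (hs : s < 8 * c)
    (ht : t < 4) (h : ((b c)⁻¹ ^ 2) ^ s * (a c α * ((b c)⁻¹ ^ 2) ^ c) ^ t = 1) : s = 0 ∧ t = 0 := by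
  simp only [inv_pow, b_sq, base_inv, a, base_pow, base_mul, base_eq_one_iff] at h
  obtain ⟨h₁, h₂⟩ := h
  have hs_cast : (s : ZMod (8 * c)) = 0 := by linear_combination -h₁
  refine ⟨Nat.eq_zero_of_dvd_of_lt ((ZMod.natCast_eq_zero_iff _ _).1 hs_cast) hs, ?_⟩
  have ht0 : ((t * (α - 1) * c : ℤ) : ZMod (8 * c)) = 0 := by
    push_cast
    linear_combination h₂ + hs_cast
  rw [ZMod.intCast_zmod_eq_zero_iff_dvd, Nat.cast_mul] at ht0
  have h8 : (8 : ℤ) ∣ t * (α - 1) := Int.dvd_of_mul_dvd_mul_right (by exact_mod_cast hc.ne') ht0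
  interval_cases t <;> omega

end Wreath

section KGroup

variable {n : ℕ}

open scoped IsMulCommutative

lemma kAlpha_emod_four (n : ℕ) : kAlpha n % 4 = 3 := by
  unfold kAlpha; split_ifs <;> rfl

lemma odd_kAlpha (n : ℕ) : Odd (kAlpha n) :=
  Int.odd_iff.2 (by have := kAlpha_emod_four n; omega)

lemma ka_pow_eight : ka n ^ 8 = 1 := by
  have h := PresentedGroup.one_of_mem (rels := kRels n) (x := FreeGroup.of true ^ 8)
    (by simp [kRels])
  rw [map_pow] at h
  exact h

lemma kb_pow : kb n ^ 2 ^ (n - 2) = ka n ^ 4 := by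
  have h := PresentedGroup.one_of_mem (rels := kRels n)
    (x := FreeGroup.of false ^ 2 ^ (n - 2) * (FreeGroup.of true ^ 4)⁻¹) (by simp [kRels])
  rw [map_mul, map_inv, map_pow, map_pow] at h
  exact mul_inv_eq_one.1 h

lemma kb_mul_ka_mul_inv : kb n * ka n * (kb n)⁻¹ = ka n ^ kAlpha n := by
  have h := PresentedGroup.one_of_mem (rels := kRels n)
    (x := FreeGroup.of false * FreeGroup.of true * (FreeGroup.of false)⁻¹ *
      (FreeGroup.of true ^ kAlpha n)⁻¹) (by simp [kRels])
  rw [map_mul, map_inv, map_mul, map_mul, map_inv, map_zpow] at h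
  exact mul_inv_eq_one.1 h

lemma ka_zpow_kAlpha_mul_self : ka n ^ (kAlpha n * kAlpha n) = ka n := by
  obtain ⟨j, hj⟩ := Int.eight_dvd_sq_sub_one_of_odd (odd_kAlpha n)
  rw [show kAlpha n * kAlpha n = 8 * j + 1 by linear_combination hj, zpow_add_one, zpow_mul,
    show ((8 : ℤ)) = ((8 : ℕ) : ℤ) from rfl, zpow_natCast, ka_pow_eight, one_zpow, one_mul]

lemma inv_kb_mul_ka_mul_kb : (kb n)⁻¹ * ka n * kb n = ka n ^ kAlpha n := by
  calc (kb n)⁻¹ * ka n * kb n = (kb n)⁻¹ * (kb n * ka n ^ kAlpha n * (kb n)⁻¹) * kb n := by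
        rw [← conj_zpow, kb_mul_ka_mul_inv, ← zpow_mul, ka_zpow_kAlpha_mul_self]
    _ = ka n ^ kAlpha n := by group

lemma commute_inv_kb_sq_ka : Commute ((kb n)⁻¹ ^ 2) (ka n) := by
  rw [Commute, SemiconjBy, ← mul_inv_eq_iff_eq_mul]
  calc (kb n)⁻¹ ^ 2 * ka n * ((kb n)⁻¹ ^ 2)⁻¹
      = (kb n)⁻¹ * ((kb n)⁻¹ * ka n * kb n) * (kb n)⁻¹⁻¹ := by
        simp only [pow_two, mul_inv_rev, inv_inv, mul_assoc]
    _ = ((kb n)⁻¹ * ka n * (kb n)⁻¹⁻¹) ^ kAlpha n := by rw [conj_zpow, inv_kb_mul_ka_mul_kb]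
    _ = ka n := by rw [inv_inv, inv_kb_mul_ka_mul_kb, ← zpow_mul, ka_zpow_kAlpha_mul_self]

variable (n) in
abbrev kPlus : Subgroup (K n) := Subgroup.closure {(kb n)⁻¹ ^ 2, ka n}

lemma inv_kb_sq_mem_kPlus : (kb n)⁻¹ ^ 2 ∈ kPlus n := Subgroup.subset_closure (by simp)

lemma ka_mem_kPlus : ka n ∈ kPlus n := Subgroup.subset_closure (by simp)

instance : IsMulCommutative (kPlus n) := by
  refine Subgroup.isMulCommutative_closure ?_
  simp only [Set.mem_insert_iff, Set.mem_singleton_iff]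
  rintro x (rfl | rfl) y (rfl | rfl)
  exacts [rfl, commute_inv_kb_sq_ka, commute_inv_kb_sq_ka.symm, rfl]


lemma inv_kb_sq_pow_two_pow_sub_three (hn : 3 ≤ n) :
    ((kb n)⁻¹ ^ 2) ^ 2 ^ (n - 3) = (ka n ^ 4)⁻¹ := by
  rw [← pow_mul, ← pow_succ', show n - 3 + 1 = n - 2 by omega, inv_pow, kb_pow]

lemma inv_kb_sq_pow_two_pow_sub_two (hn : 3 ≤ n) : ((kb n)⁻¹ ^ 2) ^ 2 ^ (n - 2) = 1 := by
  rw [show n - 2 = n - 3 + 1 by omega, pow_succ 2, pow_mul, inv_kb_sq_pow_two_pow_sub_three hn,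
    inv_pow, ← pow_mul, show 4 * 2 = 8 from rfl, ka_pow_eight, inv_one]

variable (n) in
def kh : K n := ka n * ((kb n)⁻¹ ^ 2) ^ 2 ^ (n - 5)

lemma kh_mem_kPlus : kh n ∈ kPlus n :=
  mul_mem ka_mem_kPlus (pow_mem inv_kb_sq_mem_kPlus _)

lemma kh_pow_four (hn : 5 ≤ n) : kh n ^ 4 = 1 := by
  rw [kh, (commute_inv_kb_sq_ka.pow_left _).symm.mul_pow, ← pow_mul,
    show 2 ^ (n - 5) * 4 = 2 ^ (n - 3) by rw [show n - 3 = n - 5 + 2 by omega, pow_add]; rfl,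
    inv_kb_sq_pow_two_pow_sub_three (by omega), mul_inv_cancel]

def toKPlus (hn : 5 ≤ n) :
    Multiplicative (ZMod (2 ^ (n - 2))) × Multiplicative (ZMod 4) →* kPlus n :=
  MonoidHom.coprod
    (zmodPowersHom ⟨_, inv_kb_sq_mem_kPlus⟩
      (Subtype.ext (inv_kb_sq_pow_two_pow_sub_two (by omega))))
    (zmodPowersHom ⟨_, kh_mem_kPlus⟩ (Subtype.ext (kh_pow_four hn)))

lemma coe_toKPlus (hn : 5 ≤ n) (p : Multiplicative (ZMod (2 ^ (n - 2))) × Multiplicative (ZMod 4)) :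
    (toKPlus hn p : K n) = ((kb n)⁻¹ ^ 2) ^ (toAdd p.1).val * kh n ^ (toAdd p.2).val := rfl

lemma toKPlus_surjective (hn : 5 ≤ n) : Function.Surjective (toKPlus hn) := by
  let x : kPlus n := ⟨_, inv_kb_sq_mem_kPlus⟩
  let h : kPlus n := ⟨_, kh_mem_kPlus⟩
  have hx : x ∈ (toKPlus hn).range := ⟨(ofAdd 1, 1), by
    simp only [toKPlus, MonoidHom.coprod_apply, zmodPowersHom_ofAdd_one, map_one, mul_one, x]⟩
  have hh : h ∈ (toKPlus hn).range := ⟨(1, ofAdd 1), by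
    simp only [toKPlus, MonoidHom.coprod_apply, zmodPowersHom_ofAdd_one, map_one, one_mul, h]⟩
  rw [← MonoidHom.range_eq_top, eq_top_iff, ← Subgroup.closure_closure_coe_preimage,
    Subgroup.closure_le]
  rintro ⟨g, hg⟩ (rfl | rfl)
  · exact hx
  · have ha : (⟨ka n, hg⟩ : kPlus n) = h * (x ^ 2 ^ (n - 5))⁻¹ := Subtype.ext (by simp [h, x, kh])
    rw [SetLike.mem_coe, ha]
    exact mul_mem hh (inv_mem (pow_mem hx _))

lemma two_pow_sub_two_eq_eight_mul (hn : 5 ≤ n) : 2 ^ (n - 2) = 8 * 2 ^ (n - 5) := by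
  rw [show n - 2 = 3 + (n - 5) by omega, pow_add]; rfl

def toWreath (hn : 5 ≤ n) : K n →* Wreath (2 ^ (n - 5)) :=
  PresentedGroup.toGroup (f := fun t => if t then Wreath.a _ (kAlpha n) else Wreath.b _) <| by
    simp only [kRels, Set.mem_insert_iff, Set.mem_singleton_iff]
    rintro r (rfl | rfl | rfl)
    · simp [Wreath.a_pow_eight]
    · simp [two_pow_sub_two_eq_eight_mul hn, Wreath.b_pow (odd_kAlpha n)]
    · simp [Wreath.b_mul_a_mul_inv (odd_kAlpha n)]

lemma toWreath_ka (hn : 5 ≤ n) : toWreath hn (ka n) = Wreath.a _ (kAlpha n) :=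
  PresentedGroup.toGroup.of _

lemma toWreath_kb (hn : 5 ≤ n) : toWreath hn (kb n) = Wreath.b _ :=
  PresentedGroup.toGroup.of _

lemma toKPlus_injective (hn : 5 ≤ n) : Function.Injective (toKPlus hn) := by
  refine (injective_iff_map_eq_one _).2 fun ⟨s, t⟩ h => ?_
  have h' := congrArg (toWreath hn ∘ Subtype.val) h
  simp only [Function.comp_apply, coe_toKPlus, kh, OneMemClass.coe_one, map_one, map_mul,
    map_pow, map_inv, toWreath_ka, toWreath_kb] at h'
  have hs : (toAdd s).val < 8 * 2 ^ (n - 5) := two_pow_sub_two_eq_eight_mul hn ▸ ZMod.val_lt _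
  obtain ⟨hs0, ht0⟩ := Wreath.eq_zero_of_pow_mul_pow_eq_one (by positivity) (kAlpha_emod_four n) hs
    (ZMod.val_lt _) h'
  rw [ZMod.val_eq_zero] at hs0 ht0
  exact Prod.ext hs0 ht0

lemma kb_not_mem_kPlus (hn : 5 ≤ n) : kb n ∉ kPlus n := by
  have hle : kPlus n ≤ (rightHom.comp (toWreath hn)).ker := by
    rw [Subgroup.closure_le]
    simp only [Set.insert_subset_iff, Set.singleton_subset_iff, SetLike.mem_coe,
      MonoidHom.mem_ker, MonoidHom.comp_apply, map_pow, map_inv, toWreath_ka, toWreath_kb]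
    exact ⟨by rw [Wreath.rightHom_b]; decide, rfl⟩
  intro hb
  have := hle hb
  rw [MonoidHom.mem_ker, MonoidHom.comp_apply, toWreath_kb, Wreath.rightHom_b] at this
  exact absurd this (by decide)

lemma kb_mem_normalizer_kPlus : kb n ∈ Subgroup.normalizer (kPlus n : Set (K n)) := by
  have hx : ∀ g : K n, Commute g ((kb n)⁻¹ ^ 2) → g * ((kb n)⁻¹ ^ 2) * g⁻¹ ∈ kPlus n :=
    fun g hg => by rw [hg.eq, mul_inv_cancel_right]; exact inv_kb_sq_mem_kPlus
  refine Subgroup.mem_normalizer_closure_of_conj ?_ ?_ <;>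
    simp only [Set.mem_insert_iff, Set.mem_singleton_iff] <;> rintro x (rfl | rfl)
  · exact hx _ ((Commute.inv_right (Commute.refl _)).pow_right 2)
  · exact kb_mul_ka_mul_inv ▸ zpow_mem ka_mem_kPlus _
  · simpa only [inv_inv] using hx (kb n)⁻¹ ((Commute.refl _).pow_right 2)
  · exact inv_kb_mul_ka_mul_kb ▸ zpow_mem ka_mem_kPlus _

lemma kPlus_sup_zpowers_kb : kPlus n ⊔ Subgroup.zpowers (kb n) = ⊤ := by
  rw [eq_top_iff, ← PresentedGroup.closure_range_of, Subgroup.closure_le]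
  rintro _ ⟨_ | _, rfl⟩
  · exact Subgroup.mem_sup_right (Subgroup.mem_zpowers _)
  · exact Subgroup.mem_sup_left ka_mem_kPlus

lemma index_kPlus (hn : 5 ≤ n) : (kPlus n).index = 2 := by
  refine Subgroup.index_eq_two_of_sup_zpowers_eq_top kb_mem_normalizer_kPlus ?_
    (kb_not_mem_kPlus hn) kPlus_sup_zpowers_kb
  rw [← inv_inv (kb n ^ 2), ← inv_pow]
  exact inv_mem inv_kb_sq_mem_kPlus


lemma kPlus_mul_comm : ∀ g ∈ kPlus n, ∀ h ∈ kPlus n, g * h = h * g :=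
  fun g hg h hh => congrArg Subtype.val (mul_comm (⟨g, hg⟩ : kPlus n) ⟨h, hh⟩)

end KGroup

/-- For `n ≥ 5`, the subgroup `K_n⁺ = ⟨b⁻², a⟩` of `K_n` is an abelian subgroup of index
two isomorphic to `C_(2^(n-2)) × C₄`, and it contains exactly three involutions. -/
theorem stmt18 (n : ℕ) (hn : 5 ≤ n) :
    (Subgroup.closure {((kb n)⁻¹) ^ 2, ka n} : Subgroup (K n)).index = 2 ∧
    (∀ g ∈ (Subgroup.closure {((kb n)⁻¹) ^ 2, ka n} : Subgroup (K n)),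
      ∀ h ∈ (Subgroup.closure {((kb n)⁻¹) ^ 2, ka n} : Subgroup (K n)), g * h = h * g) ∧
    Nonempty ((Subgroup.closure {((kb n)⁻¹) ^ 2, ka n} : Subgroup (K n)) ≃*
      Multiplicative (ZMod (2 ^ (n - 2))) × Multiplicative (ZMod 4)) ∧
    Nat.card {g : K n | orderOf g = 2 ∧
      g ∈ Subgroup.closure {((kb n)⁻¹) ^ 2, ka n}} = 3 := by
  let e := MulEquiv.ofBijective (toKPlus hn) ⟨toKPlus_injective hn, toKPlus_surjective hn⟩
  refine ⟨index_kPlus hn, kPlus_mul_comm, ⟨e.symm⟩, ?_⟩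
  rw [Subgroup.card_setOf_orderOf_eq_and_mem e]
  exact card_setOf_orderOf_eq_two_prod_zmod_four (m := 2 ^ (n - 3))
    (by rw [show n - 2 = n - 3 + 1 by omega, pow_succ, mul_comm]) (by positivity)
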